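/- arXiv:2109.09931 — 2 statements merged into one kernel-verified Lean document; each statement's English description precedes it below -/
import Mathlib

section
/- There exist a constant c > 0 and N such that for all n ≥ N, c·n ≤ sat_○(n, S_3) ≤ 3·n·log₂ n; that is, sat_○(n, S_3) = Ω(n) and sat_○(n, S_3) = O(n log n). -/
open Finset

/-- An abstract convex geometric hypergraph: `m` vertices on a circle, with the
cyclic ordering `0 < 1 < ⋯ < m-1 < 0`, together with a family of edges. -/
structure CGH where
  m : ℕ
  edges : Finset (Finset (Fin m))

/-- A list of points of `Fin n` is in (strict) cyclic order if some rotation of it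
is strictly increasing in the linear order of `Fin n`. -/
def CyclicSorted {n : ℕ} (l : List (Fin n)) : Prop :=
  ∃ k : ℕ, (l.rotate k).Chain' (· < ·)

/-- `H` contains a subhypergraph isomorphic to the convex geometric hypergraph `F`:
there is an injection of the vertices of `F` into `Fin n` respecting the cyclic
orderings and sending every edge of `F` to an edge of `H`. -/
def HasCopy (F : CGH) {n : ℕ} (H : Finset (Finset (Fin n))) : Prop :=
  ∃ f : Fin F.m → Fin n, Function.Injective f ∧ CyclicSorted (List.ofFn f) ∧
    ∀ e ∈ F.edges, e.image f ∈ H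

/-- `H` is an `F`-saturated `r`-uniform convex geometric hypergraph on `Fin n`. -/
def IsSat (F : CGH) (r : ℕ) {n : ℕ} (H : Finset (Finset (Fin n))) : Prop :=
  (∀ h ∈ H, h.card = r) ∧ ¬ HasCopy F H ∧
    ∀ e : Finset (Fin n), e.card = r → e ∉ H → HasCopy F (insert e H)

/-- The saturation number `sat_○(n, F)` for `r`-uniform cgh's on `Fin n`. -/
noncomputable def satNum (F : CGH) (r n : ℕ) : ℕ :=
  sInf {k | ∃ H : Finset (Finset (Fin n)), IsSat F r H ∧ H.card = k}

/-- `M_1^{(r)}`: two geometrically disjoint `r`-tuples. -/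
def M1r (r : ℕ) : CGH where
  m := 2 * r
  edges := {Finset.univ.filter (fun i : Fin (2 * r) => (i : ℕ) < r),
            Finset.univ.filter (fun i : Fin (2 * r) => r ≤ (i : ℕ))}

def M1cgh : CGH := ⟨6, {({0, 1, 2} : Finset (Fin 6)), ({3, 4, 5} : Finset (Fin 6))}⟩
def M2cgh : CGH := ⟨6, {({0, 1, 3} : Finset (Fin 6)), ({2, 4, 5} : Finset (Fin 6))}⟩
def M3cgh : CGH := ⟨6, {({0, 2, 4} : Finset (Fin 6)), ({1, 3, 5} : Finset (Fin 6))}⟩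
def S1cgh : CGH := ⟨5, {({0, 1, 4} : Finset (Fin 5)), ({0, 2, 3} : Finset (Fin 5))}⟩
def S2cgh : CGH := ⟨5, {({0, 1, 2} : Finset (Fin 5)), ({0, 3, 4} : Finset (Fin 5))}⟩
def S3cgh : CGH := ⟨5, {({0, 1, 3} : Finset (Fin 5)), ({0, 2, 4} : Finset (Fin 5))}⟩
def D1cgh : CGH := ⟨4, {({0, 1, 2} : Finset (Fin 4)), ({0, 2, 3} : Finset (Fin 4))}⟩
def D2cgh : CGH := ⟨4, {({0, 1, 2} : Finset (Fin 4)), ({0, 1, 3} : Finset (Fin 4))}⟩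

/-- The closed clockwise arc `[a, b]` in `Fin n`. -/
def arcCC {n : ℕ} (a b : Fin n) : Finset (Fin n) :=
  if a ≤ b then Finset.univ.filter (fun x => a ≤ x ∧ x ≤ b)
  else Finset.univ.filter (fun x => a ≤ x ∨ x ≤ b)

/-- The open clockwise arc `(a, b)` in `Fin n`. -/
def arcOO {n : ℕ} (a b : Fin n) : Finset (Fin n) :=
  if a < b then Finset.univ.filter (fun x => a < x ∧ x < b)
  else Finset.univ.filter (fun x => a < x ∨ x < b)

/-- The tuple `(w_1, …, w_{2ℓ+1})` (`0`-indexed here) consists of distinct points with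
`w_1 < w_3 < ⋯ < w_{2ℓ+1} < w_2 < w_4 < ⋯ < w_{2ℓ} < w_1` in the cyclic order. -/
def SemiValid {n : ℕ} (ℓ : ℕ) (w : Fin (2 * ℓ + 1) → Fin n) : Prop :=
  Function.Injective w ∧
    CyclicSorted (List.ofFn fun p : Fin (2 * ℓ + 1) =>
      w ⟨(2 * (p : ℕ)) % (2 * ℓ + 1), Nat.mod_lt _ (by omega)⟩)

/-- A semi-valid tuple is `r`-valid if moreover `|[w_i, w_{i-1}]| ≥ r` for all `i`. -/
def RValid {n : ℕ} (r ℓ : ℕ) (w : Fin (2 * ℓ + 1) → Fin n) : Prop :=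
  SemiValid ℓ w ∧ ∀ i : Fin (2 * ℓ + 1), r ≤ (arcCC (w i) (w (i - 1))).card

/-- `H_n^{(r)}(C)`: all `r`-sets meeting every interval `[w_i, w_{i-1}]`. -/
def HnC {n : ℕ} (r ℓ : ℕ) (w : Fin (2 * ℓ + 1) → Fin n) : Finset (Finset (Fin n)) :=
  (Finset.powersetCard r Finset.univ).filter fun e =>
    ∀ i : Fin (2 * ℓ + 1), (e ∩ arcCC (w i) (w (i - 1))).Nonempty

/-- `j` is the vertex `λ(v)` for `v` in `H`. -/
def IsLam {n : ℕ} [NeZero n] (H : Finset (Finset (Fin n))) (v j : Fin n) : Prop :=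
  (∃ h ∈ H, v ∈ h ∧ h ⊆ arcCC j v) ∧ ¬ ∃ h ∈ H, v ∈ h ∧ h ⊆ arcCC (j + 1) v

/-- `j` is the vertex `ρ(v)` for `v` in `H`. -/
def IsRho {n : ℕ} [NeZero n] (H : Finset (Finset (Fin n))) (v j : Fin n) : Prop :=
  (∃ h ∈ H, v ∈ h ∧ h ⊆ arcCC v j) ∧ ¬ ∃ h ∈ H, v ∈ h ∧ h ⊆ arcCC v (j - 1)

noncomputable def lamF {n : ℕ} [NeZero n] (H : Finset (Finset (Fin n))) (v : Fin n) : Fin n :=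
  letI := Classical.propDecidable (∃ j, IsLam H v j)
  if h : ∃ j, IsLam H v j then h.choose else v

noncomputable def rhoF {n : ℕ} [NeZero n] (H : Finset (Finset (Fin n))) (v : Fin n) : Fin n :=
  letI := Classical.propDecidable (∃ j, IsRho H v j)
  if h : ∃ j, IsRho H v j then h.choose else v

/-- Strict cyclic betweenness on `Fin n`. -/
def CyclicSbtw {n : ℕ} (a b c : Fin n) : Prop :=
  (a < b ∧ b < c) ∨ (b < c ∧ c < a) ∨ (c < a ∧ a < b)

/-- Isomorphism of two cgh's on `Fin n`: a bijection of the vertex set respecting the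
cyclic order and inducing a bijection of the edge sets. -/
def CGHIso {n : ℕ} (H H' : Finset (Finset (Fin n))) : Prop :=
  ∃ g : Fin n ≃ Fin n,
    (∀ a b c : Fin n, CyclicSbtw a b c → CyclicSbtw (g a) (g b) (g c)) ∧
    ∀ e : Finset (Fin n), e ∈ H ↔ e.image g ∈ H'

/-- The 3-cgh `H_n^{(3)}`: all triples containing `v_0`, together with all triples
containing one of the pairs `{v_1, v_{n-2}}`, `{v_1, v_{n-1}}`, `{v_2, v_{n-1}}`. -/
def Hn3 (n : ℕ) (hn : 6 ≤ n) : Finset (Finset (Fin n)) :=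
  (Finset.powersetCard 3 Finset.univ).filter fun e =>
    (⟨0, by omega⟩ : Fin n) ∈ e ∨
    ((⟨1, by omega⟩ : Fin n) ∈ e ∧ (⟨n - 2, by omega⟩ : Fin n) ∈ e) ∨
    ((⟨1, by omega⟩ : Fin n) ∈ e ∧ (⟨n - 1, by omega⟩ : Fin n) ∈ e) ∨
    ((⟨2, by omega⟩ : Fin n) ∈ e ∧ (⟨n - 1, by omega⟩ : Fin n) ∈ e)

/-- Saturation with respect to a family of cgh's. -/
def FamSat (ℱ : Set CGH) (r : ℕ) {n : ℕ} (H : Finset (Finset (Fin n))) : Prop :=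
  (∀ h ∈ H, h.card = r) ∧ (∀ F ∈ ℱ, ¬ HasCopy F H) ∧
    ∀ e : Finset (Fin n), e.card = r → e ∉ H → ∃ F ∈ ℱ, HasCopy F (insert e H)

noncomputable def famSatNum (ℱ : Set CGH) (r n : ℕ) : ℕ :=
  sInf {k | ∃ H : Finset (Finset (Fin n)), FamSat ℱ r H ∧ H.card = k}

/-- Rotation of a point of `Fin n` by an integer amount `m`. -/
def finShift {n : ℕ} (hn : 0 < n) (v : Fin n) (m : ℤ) : Fin n :=
  ⟨(((v : ℤ) + m) % (n : ℤ)).toNat, by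
    have h0 : (0 : ℤ) < (n : ℤ) := by exact_mod_cast hn
    have h1 := Int.emod_nonneg ((v : ℤ) + m) (by omega : (n : ℤ) ≠ 0)
    have h2 := Int.emod_lt_of_pos ((v : ℤ) + m) h0
    omega⟩

/-- The tuple `w` is `(i,k)`-consecutive: starting from position `i`, the entries at
positions `i, i+2, …, i+2(k-1)` are `k` consecutive points `v_j, v_{j+1}, …, v_{j+k-1}`. -/
def ConsecAt {n ℓ : ℕ} (hn : 0 < n) (w : Fin (2 * ℓ + 1) → Fin n)
    (i : Fin (2 * ℓ + 1)) (k : ℕ) : Prop :=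
  ∃ j : Fin n, ∀ s : ℕ, s < k →
    w (i + ⟨(2 * s) % (2 * ℓ + 1), Nat.mod_lt _ (by omega)⟩) = finShift hn j s

/-- The tuple `C_{i,k,m}`: the `k` consecutive points at positions `i, i+2, …, i+2(k-1)`
are rotated by `m` units; all other entries are unchanged. -/
def shiftTuple {n ℓ : ℕ} (hn : 0 < n) (w : Fin (2 * ℓ + 1) → Fin n)
    (i : Fin (2 * ℓ + 1)) (k : ℕ) (m : ℤ) : Fin (2 * ℓ + 1) → Fin n :=
  fun p => if (p - i).val % 2 = 0 ∧ (p - i).val / 2 < k then finShift hn (w p) m else w p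

/-!
Call `{v, v + 1, v + 2}` (indices mod `n`) a consecutive triple. In a copy of `S_3` with cyclically
ordered vertices `x, a, b, c, d` and edges `{x, a, c}`, `{x, b, d}`, each edge has a vertex of the
copy in two of its three gaps, so no edge of a copy is a consecutive triple. Hence adding a
consecutive triple to an `S_3`-free hypergraph never creates a copy, and every `S_3`-saturated
hypergraph contains all `n` of them. Conversely, the consecutive triples together with the triples
`{v_0, v_j, v_{j+1}}` and `{v_0, v_1, v_j}` form an `S_3`-saturated hypergraph with at most `3n`
edges. So `n ≤ sat_○(n, S_3) ≤ 3n`.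
-/

theorem Finset.exists_lt_lt_of_card_eq_three {α : Type*} [LinearOrder α] {s : Finset α}
    (h : s.card = 3) : ∃ a b c, a < b ∧ b < c ∧ s = {a, b, c} := by
  refine ⟨s.orderEmbOfFin h 0, s.orderEmbOfFin h 1, s.orderEmbOfFin h 2, by simp, by simp, ?_⟩
  ext x
  rw [← Finset.mem_coe, ← s.range_orderEmbOfFin h]
  simp only [Set.mem_range, Fin.exists_fin_succ, Finset.mem_insert, Finset.mem_singleton]
  simp [eq_comm]

theorem Finset.card_eq_three_of_lt {α : Type*} [LinearOrder α] {a b c : α} (hab : a < b)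
    (hbc : b < c) : ({a, b, c} : Finset α).card = 3 :=
  card_eq_three.mpr ⟨a, b, c, hab.ne, (hab.trans hbc).ne, hbc.ne, rfl⟩

theorem Fin.val_add_eq_or {n : ℕ} (a b : Fin n) :
    a.val + b.val < n ∧ (a + b).val = a.val + b.val ∨
      n ≤ a.val + b.val ∧ (a + b).val + n = a.val + b.val := by
  rw [Fin.val_add_eq_ite]
  split_ifs <;> omega

theorem Fin.val_one_of_lt {n : ℕ} [NeZero n] (h : 1 < n) : ((1 : Fin n) : ℕ) = 1 :=
  Nat.mod_eq_of_lt h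

theorem Fin.val_two_of_lt {n : ℕ} [NeZero n] (h : 2 < n) : ((2 : Fin n) : ℕ) = 2 :=
  Nat.mod_eq_of_lt h

theorem cyclicSorted_iff_exists_isChain {n : ℕ} {l : List (Fin n)} :
    CyclicSorted l ↔ ∃ k, (l.rotate k).IsChain (· < ·) :=
  Iff.rfl

theorem CyclicSorted.nodup {n : ℕ} {l : List (Fin n)} (h : CyclicSorted l) : l.Nodup := by
  obtain ⟨k, hk⟩ := cyclicSorted_iff_exists_isChain.mp h
  exact List.nodup_rotate.mp hk.pairwise.nodup

theorem hasCopy_iff_exists_cyclicSorted {F : CGH} {n : ℕ} {H : Finset (Finset (Fin n))} :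
    HasCopy F H ↔
      ∃ f : Fin F.m → Fin n, CyclicSorted (List.ofFn f) ∧ ∀ e ∈ F.edges, e.image f ∈ H :=
  ⟨fun ⟨f, _, hf, hH⟩ => ⟨f, hf, hH⟩,
    fun ⟨f, hf, hH⟩ => ⟨f, List.nodup_ofFn.mp hf.nodup, hf, hH⟩⟩

def CyclicOrder5 {n : ℕ} (a b c d e : Fin n) : Prop :=
  (a < b ∧ b < c ∧ c < d ∧ d < e) ∨ (b < c ∧ c < d ∧ d < e ∧ e < a) ∨
    (c < d ∧ d < e ∧ e < a ∧ a < b) ∨ (d < e ∧ e < a ∧ a < b ∧ b < c) ∨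
    (e < a ∧ a < b ∧ b < c ∧ c < d)

theorem cyclicSorted_iff_cyclicOrder5 {n : ℕ} {a b c d e : Fin n} :
    CyclicSorted [a, b, c, d, e] ↔ CyclicOrder5 a b c d e := by
  rw [cyclicSorted_iff_exists_isChain]
  unfold CyclicOrder5
  constructor
  · rintro ⟨k, hk⟩
    rw [← List.rotate_mod, show [a, b, c, d, e].length = 5 from rfl] at hk
    have : k % 5 < 5 := Nat.mod_lt _ (by norm_num)
    interval_cases k % 5 <;> simp [List.rotate, List.isChain_cons_cons] at hk <;> tauto
  · rintro (h | h | h | h | h)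
    exacts [⟨0, by simpa [List.isChain_cons_cons, and_assoc] using h⟩,
      ⟨1, by simp [List.rotate, List.isChain_cons_cons]; tauto⟩,
      ⟨2, by simp [List.rotate, List.isChain_cons_cons]; tauto⟩,
      ⟨3, by simp [List.rotate, List.isChain_cons_cons]; tauto⟩,
      ⟨4, by simp [List.rotate, List.isChain_cons_cons]; tauto⟩]

theorem CyclicOrder5.rotate {n : ℕ} {a b c d e : Fin n} (h : CyclicOrder5 a b c d e) :
    CyclicOrder5 e a b c d := by
  unfold CyclicOrder5 at *
  tauto

theorem hasCopy_S3cgh_iff {n : ℕ} {H : Finset (Finset (Fin n))} :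
    HasCopy S3cgh H ↔
      ∃ x a b c d : Fin n, CyclicOrder5 x a b c d ∧ {x, a, c} ∈ H ∧ {x, b, d} ∈ H := by
  simp only [hasCopy_iff_exists_cyclicSorted, S3cgh, mem_insert, mem_singleton,
    forall_eq_or_imp, forall_eq, image_insert, image_singleton]
  constructor
  · rintro ⟨f, hf, hH⟩
    refine ⟨f 0, f 1, f 2, f 3, f 4, cyclicSorted_iff_cyclicOrder5.mp ?_, hH⟩
    simpa [List.ofFn_succ] using hf
  · rintro ⟨x, a, b, c, d, h, hH⟩
    refine ⟨![x, a, b, c, d], ?_, hH⟩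
    simpa [List.ofFn_succ] using cyclicSorted_iff_cyclicOrder5.mpr h

theorem CyclicOrder5.eq_of_mem_of_mem {n : ℕ} {x a b c d z : Fin n}
    (h : CyclicOrder5 x a b c d) (hac : z ∈ ({x, a, c} : Finset (Fin n)))
    (hbd : z ∈ ({x, b, d} : Finset (Fin n))) : z = x := by
  simp only [CyclicOrder5, mem_insert, mem_singleton, Fin.lt_def, Fin.ext_iff] at *
  omega

theorem CyclicOrder5.zero_lt {n : ℕ} [NeZero n] {a b c d : Fin n} (h : CyclicOrder5 0 a b c d) :
    0 < a.val ∧ a.val < b.val ∧ b.val < c.val ∧ c.val < d.val := by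
  simp only [CyclicOrder5, Fin.lt_def, Fin.val_zero] at h
  omega

theorem satNum_le_card {F : CGH} {r n : ℕ} {H : Finset (Finset (Fin n))} (hH : IsSat F r H) :
    satNum F r n ≤ H.card :=
  Nat.sInf_le ⟨H, hH, rfl⟩

theorem le_satNum {F : CGH} {r n k : ℕ} (hex : ∃ H : Finset (Finset (Fin n)), IsSat F r H)
    (hk : ∀ H : Finset (Finset (Fin n)), IsSat F r H → k ≤ H.card) : k ≤ satNum F r n := by
  obtain ⟨H, hH⟩ := hex
  exact le_csInf ⟨H.card, H, hH, rfl⟩ (by rintro _ ⟨H', hH', rfl⟩; exact hk H' hH')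

theorem IsSat.mem_of_forall_cyclicOrder5_ne {n : ℕ} {H : Finset (Finset (Fin n))}
    {e : Finset (Fin n)} (hH : IsSat S3cgh 3 H) (he : e.card = 3)
    (hne : ∀ x a b c d, CyclicOrder5 x a b c d → {x, a, c} ≠ e) : e ∈ H := by
  by_contra heH
  obtain ⟨x, a, b, c, d, h, hac, hbd⟩ := hasCopy_S3cgh_iff.mp (hH.2.2 e he heH)
  rw [mem_insert] at hac hbd
  rcases hac with hac | hac
  · exact hne _ _ _ _ _ h hac
  rcases hbd with hbd | hbd
  -- `{x, b, d}` is the first edge of the same copy read from `d`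
  · exact hne _ _ _ _ _ h.rotate (by rw [← hbd, insert_comm d x, pair_comm d b])
  · exact hH.2.1 (hasCopy_S3cgh_iff.mpr ⟨x, a, b, c, d, h, hac, hbd⟩)

section Consecutive

variable {n : ℕ} [NeZero n]

def consecTriple (v : Fin n) : Finset (Fin n) :=
  {v, v + 1, v + 2}

theorem mem_consecTriple (hn : 2 < n) {v y : Fin n} :
    y ∈ consecTriple v ↔ y.val = v.val ∨ y.val = v.val + 1 ∨ y.val = v.val + 2 ∨
      y.val + n = v.val + 1 ∨ y.val + n = v.val + 2 := by
  have := Fin.val_add_eq_or v 1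
  have := Fin.val_add_eq_or v 2
  have := Fin.val_one_of_lt (n := n) (by omega)
  have := Fin.val_two_of_lt hn
  simp only [consecTriple, mem_insert, mem_singleton, Fin.ext_iff]
  omega

theorem CyclicOrder5.triple_ne_consecTriple {p q r s t : Fin n} (h : CyclicOrder5 p q r s t)
    (v : Fin n) : {p, q, s} ≠ consecTriple v := by
  simp only [CyclicOrder5, Fin.lt_def] at h
  have hn : 2 < n := by omega
  intro heq
  have hp := (mem_consecTriple hn).mp (heq ▸ by simp : p ∈ consecTriple v)
  have hq := (mem_consecTriple hn).mp (heq ▸ by simp : q ∈ consecTriple v)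
  have hs := (mem_consecTriple hn).mp (heq ▸ by simp : s ∈ consecTriple v)
  omega

theorem card_consecTriple (hn : 2 < n) (v : Fin n) : (consecTriple v).card = 3 := by
  have := Fin.val_add_eq_or v 1
  have := Fin.val_add_eq_or v 2
  have := Fin.val_one_of_lt (n := n) (by omega)
  have := Fin.val_two_of_lt hn
  refine card_eq_three.mpr ⟨v, v + 1, v + 2, ?_, ?_, ?_, rfl⟩ <;>
    simp only [ne_eq, Fin.ext_iff] <;> omega

theorem consecTriple_injective (hn : 4 < n) : Function.Injective (consecTriple (n := n)) := by
  intro u v huv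
  have hu : u ∈ consecTriple v := huv ▸ by simp [consecTriple]
  have hv : v ∈ consecTriple u := huv ▸ by simp [consecTriple]
  rw [mem_consecTriple (by omega)] at hu hv
  exact Fin.ext (by omega)

theorem consecTriple_mem_of_isSat {H : Finset (Finset (Fin n))} (hH : IsSat S3cgh 3 H)
    (hn : 2 < n) (v : Fin n) : consecTriple v ∈ H :=
  hH.mem_of_forall_cyclicOrder5_ne (card_consecTriple hn v)
    fun _ _ _ _ _ h => h.triple_ne_consecTriple v

theorem le_card_of_isSat {H : Finset (Finset (Fin n))} (hH : IsSat S3cgh 3 H) (hn : 4 < n) :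
    n ≤ H.card :=
  calc n = (univ.image (consecTriple (n := n))).card := by
        rw [card_image_of_injective _ (consecTriple_injective hn), card_univ, Fintype.card_fin]
    _ ≤ H.card := card_le_card fun e he => by
        obtain ⟨v, -, rfl⟩ := mem_image.mp he
        exact consecTriple_mem_of_isSat hH (by omega) v

end Consecutive

-- The filter discards the degenerate sets `{0, j, j + 1}` with `j ∈ {0, n - 1}` and `{0, 1, j}`
-- with `j ≤ 1`.
def s3SatHypergraph (n : ℕ) [NeZero n] : Finset (Finset (Fin n)) :=
  (univ.image consecTriple ∪ univ.image (fun j => {0, j, j + 1}) ∪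
    univ.image (fun j => {0, 1, j})).filter (·.card = 3)

section Construction

variable {n : ℕ} [NeZero n]

theorem card_s3SatHypergraph_le : (s3SatHypergraph n).card ≤ 3 * n :=
  calc (s3SatHypergraph n).card
      ≤ (univ.image consecTriple).card
          + (univ.image fun j : Fin n => ({0, j, j + 1} : Finset _)).card
          + (univ.image fun j : Fin n => ({0, 1, j} : Finset _)).card :=
        (card_filter_le _ _).trans <| (card_union_le _ _).trans <| by
          gcongr
          exact card_union_le _ _
    _ ≤ n + n + n := by gcongr <;> exact card_image_le.trans (by simp)
    _ = 3 * n := by ring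

theorem zero_mem_of_mem_s3SatHypergraph {e : Finset (Fin n)} (he : e ∈ s3SatHypergraph n)
    (hne : ∀ v, e ≠ consecTriple v) : 0 ∈ e := by
  simp only [s3SatHypergraph, mem_filter, mem_union, mem_image, mem_univ, true_and] at he
  obtain ⟨(⟨v, rfl⟩ | ⟨j, rfl⟩) | ⟨j, rfl⟩, -⟩ := he
  · exact absurd rfl (hne v)
  all_goals simp

theorem succ_or_one_of_mem_s3SatHypergraph {a c : Fin n} (ha : 0 < a.val) (hac : a.val < c.val)
    (he : {0, a, c} ∈ s3SatHypergraph n) (hne : ∀ v, {0, a, c} ≠ consecTriple v) :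
    c.val = a.val + 1 ∨ a.val = 1 := by
  have := Fin.val_one_of_lt (n := n) (by omega)
  simp only [s3SatHypergraph, mem_filter, mem_union, mem_image, mem_univ, true_and] at he
  obtain ⟨(⟨v, hv⟩ | ⟨j, hj⟩) | ⟨j, hj⟩, -⟩ := he
  · exact absurd hv.symm (hne v)
  · have hja : a ∈ ({0, j, j + 1} : Finset (Fin n)) := hj ▸ by simp
    have hjc : c ∈ ({0, j, j + 1} : Finset (Fin n)) := hj ▸ by simp
    have := Fin.val_add_eq_or j 1
    simp only [mem_insert, mem_singleton, Fin.ext_iff, Fin.val_zero] at hja hjc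
    omega
  · have hja : a ∈ ({0, 1, j} : Finset (Fin n)) := hj ▸ by simp
    have hjc : c ∈ ({0, 1, j} : Finset (Fin n)) := hj ▸ by simp
    simp only [mem_insert, mem_singleton, Fin.ext_iff, Fin.val_zero] at hja hjc
    omega

theorem not_hasCopy_s3SatHypergraph : ¬ HasCopy S3cgh (s3SatHypergraph n) := by
  rw [hasCopy_S3cgh_iff]
  rintro ⟨x, a, b, c, d, h, hac, hbd⟩
  have hac_nc := h.triple_ne_consecTriple
  have hbd_nc : ∀ v, {x, b, d} ≠ consecTriple v := by
    rw [show ({x, b, d} : Finset (Fin n)) = {d, x, b} by rw [insert_comm d x, pair_comm d b]]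
    exact h.rotate.triple_ne_consecTriple
  obtain rfl : 0 = x := h.eq_of_mem_of_mem (zero_mem_of_mem_s3SatHypergraph hac hac_nc)
    (zero_mem_of_mem_s3SatHypergraph hbd hbd_nc)
  obtain ⟨ha, hab, hbc, hcd⟩ := h.zero_lt
  have := succ_or_one_of_mem_s3SatHypergraph ha (hab.trans hbc) hac hac_nc
  have := succ_or_one_of_mem_s3SatHypergraph (ha.trans hab) (hbc.trans hcd) hbd hbd_nc
  omega

theorem mem_s3SatHypergraph_of_consecutive {u v w : Fin n} (huv : v.val = u.val + 1)
    (hvw : w.val = v.val + 1) : {u, v, w} ∈ s3SatHypergraph n := by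
  have hn : 2 < n := by omega
  have := Fin.val_add_eq_or u 1
  have := Fin.val_add_eq_or u 2
  have := Fin.val_one_of_lt (n := n) (by omega)
  have := Fin.val_two_of_lt hn
  obtain rfl : u + 1 = v := Fin.ext (by omega)
  obtain rfl : u + 2 = w := Fin.ext (by omega)
  exact mem_filter.mpr ⟨mem_union_left _ (mem_union_left _ (mem_image_of_mem _ (mem_univ u))),
    card_consecTriple hn u⟩

theorem mem_s3SatHypergraph_of_zero_succ {z a c : Fin n} (hz : z.val = 0) (ha : 0 < a.val)
    (hc : c.val = a.val + 1) : {z, a, c} ∈ s3SatHypergraph n := by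
  have hcard : ({z, a, c} : Finset (Fin n)).card = 3 :=
    card_eq_three_of_lt (Fin.lt_def.mpr (by omega)) (Fin.lt_def.mpr (by omega))
  have := Fin.val_add_eq_or a 1
  have := Fin.val_one_of_lt (n := n) (by omega)
  obtain rfl : 0 = z := Fin.ext (by simp [hz])
  obtain rfl : a + 1 = c := Fin.ext (by omega)
  exact mem_filter.mpr ⟨mem_union_left _ (mem_union_right _ (mem_image_of_mem _ (mem_univ a))),
    hcard⟩

theorem mem_s3SatHypergraph_of_zero_one {z a c : Fin n} (hz : z.val = 0) (ha : a.val = 1)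
    (hc : 1 < c.val) : {z, a, c} ∈ s3SatHypergraph n := by
  have hcard : ({z, a, c} : Finset (Fin n)).card = 3 :=
    card_eq_three_of_lt (Fin.lt_def.mpr (by omega)) (Fin.lt_def.mpr (by omega))
  have := Fin.val_one_of_lt (n := n) (by omega)
  obtain rfl : 0 = z := Fin.ext (by simp [hz])
  obtain rfl : 1 = a := Fin.ext (by omega)
  exact mem_filter.mpr ⟨mem_union_right _ (mem_image_of_mem _ (mem_univ c)), hcard⟩

theorem hasCopy_insert_of_zero {α β γ : Fin n} (hα : α.val = 0) (hβ : 1 < β.val)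
    (hβγ : β.val + 1 < γ.val) : HasCopy S3cgh (insert {α, β, γ} (s3SatHypergraph n)) := by
  obtain ⟨one, h₁⟩ : ∃ one : Fin n, one.val = 1 := ⟨⟨1, by omega⟩, rfl⟩
  obtain ⟨β₁, hβ₁⟩ : ∃ β₁ : Fin n, β₁.val = β.val + 1 := ⟨⟨β.val + 1, by omega⟩, rfl⟩
  refine hasCopy_S3cgh_iff.mpr ⟨α, one, β, β₁, γ, ?_,
    mem_insert_of_mem (mem_s3SatHypergraph_of_zero_one hα h₁ (by omega)), mem_insert_self _ _⟩
  simp only [CyclicOrder5, Fin.lt_def]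
  omega

theorem hasCopy_insert_of_succ_lt {α β γ : Fin n} (hα : 0 < α.val) (hαβ : α.val < β.val)
    (hβγ : β.val + 1 < γ.val) : HasCopy S3cgh (insert {α, β, γ} (s3SatHypergraph n)) := by
  obtain ⟨β₁, hβ₁⟩ : ∃ β₁ : Fin n, β₁.val = β.val + 1 := ⟨⟨β.val + 1, by omega⟩, rfl⟩
  refine hasCopy_S3cgh_iff.mpr ⟨β, β₁, γ, 0, α, ?_, mem_insert_of_mem ?_, ?_⟩
  · simp only [CyclicOrder5, Fin.lt_def, Fin.val_zero]
    omega
  · rw [pair_comm _ (0 : Fin n), insert_comm β (0 : Fin n)]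
    exact mem_s3SatHypergraph_of_zero_succ rfl (by omega) hβ₁
  · rw [pair_comm γ α, insert_comm β α]
    exact mem_insert_self _ _

theorem hasCopy_insert_of_lt_pred {α β γ : Fin n} (hα : 0 < α.val) (hαβ : α.val + 1 < β.val)
    (hβγ : γ.val = β.val + 1) : HasCopy S3cgh (insert {α, β, γ} (s3SatHypergraph n)) := by
  obtain ⟨β₀, hβ₀⟩ : ∃ β₀ : Fin n, β₀.val + 1 = β.val := ⟨⟨β.val - 1, by omega⟩, by simp; omega⟩
  refine hasCopy_S3cgh_iff.mpr ⟨β, γ, 0, α, β₀, ?_, ?_, mem_insert_of_mem ?_⟩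
  · simp only [CyclicOrder5, Fin.lt_def, Fin.val_zero]
    omega
  · rw [pair_comm γ α, insert_comm β α]
    exact mem_insert_self _ _
  · rw [insert_comm β (0 : Fin n), pair_comm β]
    exact mem_s3SatHypergraph_of_zero_succ rfl (by omega) (by omega)

theorem hasCopy_insert_s3SatHypergraph {e : Finset (Fin n)} (he : e.card = 3)
    (heH : e ∉ s3SatHypergraph n) : HasCopy S3cgh (insert e (s3SatHypergraph n)) := by
  obtain ⟨α, β, γ, hαβ, hβγ, rfl⟩ := exists_lt_lt_of_card_eq_three he
  rw [Fin.lt_def] at hαβ hβγ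
  by_cases hα : α.val = 0
  · have hβ : 1 < β.val := by
      by_contra!
      exact heH (mem_s3SatHypergraph_of_zero_one hα (by omega) (by omega))
    have hβγ' : β.val + 1 < γ.val := by
      by_contra!
      exact heH (mem_s3SatHypergraph_of_zero_succ hα (by omega) (by omega))
    exact hasCopy_insert_of_zero hα hβ hβγ'
  by_cases hβγ' : β.val + 1 < γ.val
  · exact hasCopy_insert_of_succ_lt (by omega) hαβ hβγ'
  have hαβ' : α.val + 1 < β.val := by
    by_contra!
    exact heH (mem_s3SatHypergraph_of_consecutive (by omega) (by omega))
  exact hasCopy_insert_of_lt_pred (by omega) hαβ' (by omega)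

theorem isSat_s3SatHypergraph : IsSat S3cgh 3 (s3SatHypergraph n) :=
  ⟨fun _ he => (mem_filter.mp he).2, not_hasCopy_s3SatHypergraph,
    fun _ => hasCopy_insert_s3SatHypergraph⟩

end Construction

theorem sat_S3_bounds : ∃ c : ℝ, 0 < c ∧ ∃ N : ℕ, ∀ n : ℕ, N ≤ n →
    c * n ≤ (satNum S3cgh 3 n : ℝ) ∧ (satNum S3cgh 3 n : ℝ) ≤ 3 * n * Real.logb 2 n := by
  refine ⟨1, one_pos, 5, fun n hn => ?_⟩
  have : NeZero n := ⟨by omega⟩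
  have hlow : n ≤ satNum S3cgh 3 n :=
    le_satNum ⟨_, isSat_s3SatHypergraph⟩ fun _ hH => le_card_of_isSat hH (by omega)
  have hup : satNum S3cgh 3 n ≤ 3 * n :=
    (satNum_le_card isSat_s3SatHypergraph).trans card_s3SatHypergraph_le
  have hlog : 1 ≤ Real.logb 2 n := by
    rw [Real.le_logb_iff_rpow_le one_lt_two (by positivity), Real.rpow_one]
    exact_mod_cast (by omega : 2 ≤ n)
  constructor
  · simpa using (Nat.cast_le (α := ℝ)).mpr hlow
  · calc (satNum S3cgh 3 n : ℝ) ≤ 3 * n := by exact_mod_cast hup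
      _ ≤ 3 * n * Real.logb 2 n := le_mul_of_one_le_right (by positivity) hlog
end

section
/- For every n ≥ 6, every M_3-saturated 3-cgh on Ω_n contains every triple of the form {v_i, v_{i+1}, v_j} with v_j ∉ {v_i, v_{i+1}} (i.e., every triple containing a pair of cyclically consecutive vertices), and consequently sat_○(n, M_3) ≥ n(n−3). -/
open Finset

/-! If a triple containing two cyclically consecutive vertices were missing from an
`M_3`-saturated `H`, adding it would create a copy of `M_3` having that triple as an edge.
But the vertices of either edge of `M_3` alternate with those of the other edge, so no two of
them are consecutive on the circle. Hence `H` contains all `n (n - 3)` such triples. -/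

def IsCyclicSucc {n : ℕ} (a b : Fin n) : Prop :=
  (b : ℕ) = ((a : ℕ) + 1) % n

instance {n : ℕ} : DecidableRel (@IsCyclicSucc n) := fun _ _ => Nat.decEq _ _

theorem isCyclicSucc_iff_eq_add_one {m : ℕ} {a b : Fin (m + 1)} :
    IsCyclicSucc a b ↔ b = a + 1 := by
  rw [IsCyclicSucc, Fin.ext_iff, Fin.val_add_one]
  split_ifs with h
  · simp [h, Nat.mod_self]
  · rw [Nat.mod_eq_of_lt]
    exact Nat.succ_lt_succ (Fin.val_lt_last h)

theorem StrictMono.isCyclicSucc_of_isCyclicSucc {m n : ℕ} {g : Fin m → Fin n}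
    (hg : StrictMono g) {a b : Fin m} (hab : IsCyclicSucc (g a) (g b)) : IsCyclicSucc a b := by
  unfold IsCyclicSucc at hab ⊢
  rcases Nat.lt_or_ge ((g a : ℕ) + 1) n with hlt | hge
  · rw [Nat.mod_eq_of_lt hlt] at hab
    have hab' : a < b := hg.lt_iff_lt.1 (by rw [Fin.lt_def]; omega)
    have hsucc : (b : ℕ) = a + 1 := by
      by_contra hne
      have hp : a.val + 1 < m := by omega
      have h1 := hg (show a < ⟨a + 1, hp⟩ by rw [Fin.lt_def]; simp)
      have h2 := hg (show (⟨a + 1, hp⟩ : Fin m) < b by rw [Fin.lt_def]; simp; omega)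
      rw [Fin.lt_def] at h1 h2
      omega
    rw [hsucc, Nat.mod_eq_of_lt (by omega)]
  · -- `g a` is the largest value and `g b = 0` the smallest, so `a` is last and `b` first.
    have hn : (g a : ℕ) + 1 = n := le_antisymm (g a).2 hge
    rw [hn, Nat.mod_self] at hab
    have hb : (b : ℕ) = 0 := by
      by_contra hne
      have := hg (show (⟨0, by omega⟩ : Fin m) < b by rw [Fin.lt_def]; simp; omega)
      rw [Fin.lt_def] at this
      omega
    have ha : (a : ℕ) + 1 = m := by
      by_contra hne
      have := hg (show a < ⟨m - 1, by omega⟩ by rw [Fin.lt_def]; simp; omega)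
      rw [Fin.lt_def] at this
      omega
    rw [hb, ha, Nat.mod_self]

theorem CyclicSorted.exists_strictMono {m n : ℕ} {f : Fin (m + 1) → Fin n}
    (hf : CyclicSorted (List.ofFn f)) : ∃ k : Fin (m + 1), StrictMono fun p => f (p + k) := by
  obtain ⟨k, hk⟩ := hf
  refine ⟨Fin.ofNat (m + 1) k, fun p q hpq => ?_⟩
  have := List.pairwise_iff_getElem.1 (List.isChain_iff_pairwise.1 hk) p q
    (by simpa using p.2) (by simpa using q.2) hpq
  simp only [List.getElem_rotate, List.getElem_ofFn, List.length_ofFn] at this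
  have hval : ∀ r : Fin (m + 1),
      r + Fin.ofNat (m + 1) k = ⟨(r + k) % (m + 1), Nat.mod_lt _ m.succ_pos⟩ :=
    fun r => Fin.ext (by simp [Fin.val_add, Nat.add_mod])
  simpa only [hval] using this

theorem CyclicSorted.isCyclicSucc_of_isCyclicSucc {m n : ℕ} {f : Fin m → Fin n}
    (hf : CyclicSorted (List.ofFn f)) {a b : Fin m} (hab : IsCyclicSucc (f a) (f b)) :
    IsCyclicSucc a b := by
  cases m with
  | zero => exact a.elim0
  | succ m =>
    obtain ⟨k, hk⟩ := hf.exists_strictMono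
    have := hk.isCyclicSucc_of_isCyclicSucc (a := a - k) (b := b - k) (by simpa using hab)
    rw [isCyclicSucc_iff_eq_add_one] at this ⊢
    rwa [sub_add_eq_add_sub, sub_left_inj] at this

theorem M3cgh_edges_not_isCyclicSucc :
    ∀ e ∈ M3cgh.edges, ∀ a ∈ e, ∀ b ∈ e, ¬ IsCyclicSucc a b := by
  decide

theorem HasCopy.exists_edge_image_eq_of_insert {F : CGH} {n : ℕ}
    {H : Finset (Finset (Fin n))} {e : Finset (Fin n)} (hcopy : HasCopy F (insert e H))
    (hfree : ¬ HasCopy F H) :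
    ∃ f : Fin F.m → Fin n, CyclicSorted (List.ofFn f) ∧ ∃ e' ∈ F.edges, e'.image f = e := by
  obtain ⟨f, hinj, hcs, hmem⟩ := hcopy
  refine ⟨f, hcs, ?_⟩
  by_contra! hne
  exact hfree ⟨f, hinj, hcs, fun e' he' => (mem_insert.1 (hmem e' he')).resolve_left (hne e' he')⟩

theorem IsSat.mem_of_isCyclicSucc {F : CGH} {r n : ℕ} {H : Finset (Finset (Fin n))}
    (hF : ∀ e ∈ F.edges, ∀ a ∈ e, ∀ b ∈ e, ¬ IsCyclicSucc a b) (hH : IsSat F r H)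
    {e : Finset (Fin n)} (he : e.card = r) {x y : Fin n} (hx : x ∈ e) (hy : y ∈ e)
    (hxy : IsCyclicSucc x y) : e ∈ H := by
  by_contra hne
  obtain ⟨f, hf, e', he', rfl⟩ := (hH.2.2 e he hne).exists_edge_image_eq_of_insert hH.2.1
  obtain ⟨a, ha, rfl⟩ := mem_image.1 hx
  obtain ⟨b, hb, rfl⟩ := mem_image.1 hy
  exact hF e' he' a ha b hb (hf.isCyclicSucc_of_isCyclicSucc hxy)

theorem exists_isSat (F : CGH) (hF : F.edges.Nonempty) (r n : ℕ) :
    ∃ H : Finset (Finset (Fin n)), IsSat F r H := by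
  classical
  let free := (univ : Finset (Finset (Finset (Fin n)))).filter
    fun H => (∀ h ∈ H, h.card = r) ∧ ¬ HasCopy F H
  have hempty : ∅ ∈ free := by
    obtain ⟨e, he⟩ := hF
    simp only [free, mem_filter, mem_univ, true_and, notMem_empty, IsEmpty.forall_iff,
      implies_true]
    exact fun ⟨f, _, _, hmem⟩ => notMem_empty _ (hmem e he)
  obtain ⟨H, hH, hmax⟩ := free.exists_max_image card ⟨∅, hempty⟩
  simp only [free, mem_filter, mem_univ, true_and] at hH hmax
  refine ⟨H, hH.1, hH.2, fun e he hne => ?_⟩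
  by_contra hnc
  have := hmax (insert e H) ⟨by simpa [forall_mem_insert] using ⟨he, hH.1⟩, hnc⟩
  rw [card_insert_of_notMem hne] at this
  omega

section Counting

variable {G : Type*} [AddCommGroup G] [DecidableEq G] {c : G}

theorem eq_of_add_mem_of_sub_notMem (hc : c ≠ 0) {i j x : G}
    (hj : j ∉ ({i - c, i, i + c} : Finset G)) (hx : x ∈ ({i, i + c, j} : Finset G))
    (hxc : x + c ∈ ({i, i + c, j} : Finset G)) (hxc' : x - c ∉ ({i, i + c, j} : Finset G)) :
    x = i := by
  simp only [mem_insert, mem_singleton] at hj hx hxc hxc'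
  grind

theorem triple_injOn (hc : c ≠ 0) (hc2 : c + c ≠ 0) :
    Set.InjOn (fun p : (_ : G) × G => ({p.1, p.1 + c, p.2} : Finset G))
      {p | p.2 ∉ ({p.1 - c, p.1, p.1 + c} : Finset G)} := by
  rintro ⟨i, j⟩ hij ⟨i', j'⟩ hij' h
  simp only at h
  have hi : i' = i := eq_of_add_mem_of_sub_notMem hc hij (by rw [h]; simp) (by rw [h]; simp)
    (by rw [h]; simp only [mem_insert, mem_singleton] at hij' ⊢; grind)
  subst hi
  have hj : j ∈ ({i', i' + c, j'} : Finset G) := by simp [← h]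
  simp only [mem_insert, mem_singleton] at hij hj
  grind

theorem card_mul_card_sub_three_le [Fintype G] (hc : c ≠ 0) (hc2 : c + c ≠ 0)
    {t : Finset (Finset G)}
    (ht : ∀ i j : G, j ≠ i - c → j ≠ i → j ≠ i + c → {i, i + c, j} ∈ t) :
    Fintype.card G * (Fintype.card G - 3) ≤ t.card := by
  have hthree : ∀ i : G, ({i - c, i, i + c} : Finset G).card = 3 := fun i =>
    card_eq_three.2 ⟨_, _, _, by grind, by grind, by grind, rfl⟩
  calc Fintype.card G * (Fintype.card G - 3)
      = ((univ : Finset G).sigma fun i => univ \ {i - c, i, i + c}).card := by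
        simp [card_sigma, card_sdiff, hthree]
    _ ≤ t.card := by
        refine card_le_card_of_injOn _ ?_ ((triple_injOn hc hc2).mono fun p hp => ?_)
        · rintro ⟨i, j⟩ hij
          simp only [coe_sigma, Set.mem_sigma_iff, coe_univ, Set.mem_univ, coe_sdiff,
            Set.mem_sdiff, mem_coe, mem_insert, mem_singleton, true_and, not_or] at hij
          exact ht i j hij.1 hij.2.1 hij.2.2
        · simpa using hp

end Counting

theorem sat_M3_lower (n : ℕ) (hn : 6 ≤ n) :
    (∀ H : Finset (Finset (Fin n)), IsSat M3cgh 3 H →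
      ∀ i j : Fin n, j ≠ i → j ≠ i + ⟨1, by omega⟩ →
        ({i, i + ⟨1, by omega⟩, j} : Finset (Fin n)) ∈ H) ∧
    n * (n - 3) ≤ satNum M3cgh 3 n := by
  have : NeZero n := ⟨by omega⟩
  set one : Fin n := ⟨1, by omega⟩
  have hone : one ≠ 0 := by simp [one, Fin.ext_iff]
  have htwo : one + one ≠ 0 := by
    simp [one, Fin.ext_iff, Fin.val_add, Nat.mod_eq_of_lt (by omega : 2 < n)]
  have hmem (H : Finset (Finset (Fin n))) (hH : IsSat M3cgh 3 H) (i j : Fin n) (hji : j ≠ i)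
      (hji' : j ≠ i + one) : {i, i + one, j} ∈ H :=
    hH.mem_of_isCyclicSucc M3cgh_edges_not_isCyclicSucc
      (card_eq_three.2 ⟨_, _, _, by simpa using hone, hji.symm, hji'.symm, rfl⟩)
      (by simp) (by simp) (Fin.val_add i one)
  refine ⟨hmem, le_csInf ?_ ?_⟩
  · obtain ⟨H, hH⟩ := exists_isSat M3cgh ⟨_, mem_insert_self _ _⟩ 3 n
    exact ⟨_, H, hH, rfl⟩
  · rintro _ ⟨H, hH, rfl⟩
    simpa using card_mul_card_sub_three_le hone htwo fun i j _ => hmem H hH i j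
end
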